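/- arXiv:0802.4371 — 8 statements merged into one kernel-verified Lean document; each statement's English description precedes it below -/
import Mathlib

section
/- Let S be a finite nonempty set and let f : S → ℝ be a nonnegative function, not identically zero. Define θ ∈ (0, 1] by (1/|S|) Σ_{s∈S} f(s) = θ·‖f‖_∞, where ‖f‖_∞ = max_{s∈S} f(s). Then there exists an integer k with 0 ≤ k ≤ log₂(2/θ) such that |{s ∈ S : 2^{−k−1}‖f‖_∞ < f(s) ≤ 2^{−k}‖f‖_∞}| ≥ (2^{k−1} θ / log₂(4/θ)) · |S|. -/
open Finset
open scoped Classical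

set_option maxHeartbeats 2000000 in
/-- Dyadic pigeonholing, second form: if `f ≥ 0` is not identically zero on `S` and
`(1/|S|) Σ f = θ‖f‖_∞`, there is `0 ≤ k ≤ log₂(2/θ)` with
`|{s ∈ S : 2^{−k−1}‖f‖_∞ < f(s) ≤ 2^{−k}‖f‖_∞}| ≥ (2^{k−1}θ/log₂(4/θ))·|S|`. -/
theorem statement4 {α : Type*} (S : Finset α) (hS : S.Nonempty) (f : α → ℝ)
    (hnonneg : ∀ s ∈ S, 0 ≤ f s) (hne : ∃ s ∈ S, f s ≠ 0)
    (θ : ℝ) (hθ : (∑ s ∈ S, f s) / (S.card : ℝ) = θ * (S.sup' hS f)) :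
    ∃ k : ℕ, (k : ℝ) ≤ Real.logb 2 (2/θ) ∧
      (2:ℝ) ^ ((k:ℝ) - 1) * θ / Real.logb 2 (4/θ) * (S.card : ℝ) ≤
        ((S.filter (fun s =>
          (2:ℝ) ^ (-(k:ℝ) - 1) * (S.sup' hS f) < f s ∧
          f s ≤ (2:ℝ) ^ (-(k:ℝ)) * (S.sup' hS f))).card : ℝ) := by
  classical
  set M := S.sup' hS f with hMdef
  obtain ⟨s₀, hs₀S, hs₀⟩ := hne
  have hfs₀ : 0 < f s₀ := lt_of_le_of_ne (hnonneg s₀ hs₀S) (Ne.symm hs₀)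
  have hMpos : 0 < M := lt_of_lt_of_le hfs₀ (le_sup' f hs₀S)
  have hfleM : ∀ s ∈ S, f s ≤ M := fun s hs => le_sup' f hs
  have hc : 0 < (S.card : ℝ) := by
    exact_mod_cast card_pos.mpr hS
  have hsumpos : 0 < ∑ s ∈ S, f s :=
    Finset.sum_pos' hnonneg ⟨s₀, hs₀S, hfs₀⟩
  have hsum : ∑ s ∈ S, f s = θ * M * (S.card : ℝ) := by
    field_simp at hθ
    linarith [hθ]
  have hθpos : 0 < θ := by
    nlinarith [mul_pos hMpos hc]
  have hsumle : ∑ s ∈ S, f s ≤ M * (S.card : ℝ) := by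
    calc ∑ s ∈ S, f s ≤ ∑ _s ∈ S, M := Finset.sum_le_sum hfleM
    _ = M * (S.card : ℝ) := by rw [Finset.sum_const, nsmul_eq_mul]; ring
  have hθ1 : θ ≤ 1 := by nlinarith
  have h2θ : (1:ℝ) ≤ 2 / θ := by
    rw [le_div_iff₀ hθpos]; linarith
  have hlogb0 : 0 ≤ Real.logb 2 (2/θ) := Real.logb_nonneg one_lt_two h2θ
  set K := ⌊Real.logb 2 (2/θ)⌋₊ with hKdef
  have hK1 : (K:ℝ) ≤ Real.logb 2 (2/θ) := Nat.floor_le hlogb0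
  have hK2 : Real.logb 2 (2/θ) < (K:ℝ) + 1 := Nat.lt_floor_add_one _
  have hθne : θ ≠ 0 := ne_of_gt hθpos
  have hL : Real.logb 2 (4/θ) = Real.logb 2 (2/θ) + 1 := by
    have : (4:ℝ)/θ = 2 * (2/θ) := by ring
    rw [this, Real.logb_mul (by norm_num) (by positivity), Real.logb_self_eq_one (by norm_num)]
    ring
  have hLpos : 0 < Real.logb 2 (4/θ) := by rw [hL]; linarith
  -- tail bound: 2^(-(K+1)) < θ/2
  have htail : (2:ℝ) ^ (-(K:ℝ) - 1) < θ / 2 := by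
    have h1 : 2/θ < (2:ℝ) ^ ((K:ℝ) + 1) :=
      (Real.logb_lt_iff_lt_rpow one_lt_two (by positivity)).mp hK2
    have h2 : (0:ℝ) < (2:ℝ) ^ ((K:ℝ) + 1) := Real.rpow_pos_of_pos two_pos _
    have h3 : (2:ℝ) ^ (-(K:ℝ) - 1) = ((2:ℝ) ^ ((K:ℝ) + 1))⁻¹ := by
      rw [← Real.rpow_neg (by norm_num)]; ring_nf
    rw [h3]
    rw [div_lt_iff₀ hθpos] at h1
    rw [inv_lt_iff_one_lt_mul₀ h2] at *
    nlinarith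
  -- the dyadic level sets
  set A : ℕ → Finset α := fun k => S.filter (fun s =>
    (2:ℝ) ^ (-(k:ℝ) - 1) * M < f s ∧ f s ≤ (2:ℝ) ^ (-(k:ℝ)) * M) with hAdef
  by_contra hcon
  push_neg at hcon
  have hbound : ∀ k : ℕ, k ≤ K → ((A k).card : ℝ) <
      (2:ℝ) ^ ((k:ℝ) - 1) * θ / Real.logb 2 (4/θ) * (S.card : ℝ) := by
    intro k hk
    exact hcon k (le_trans (by exact_mod_cast hk) hK1)
  -- T := heavy part
  set T := S.filter (fun s => (2:ℝ) ^ (-(K:ℝ) - 1) * M < f s) with hTdef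
  -- T is contained in the union of the A k, k ≤ K
  have hTsub : T ⊆ (Finset.range (K+1)).biUnion A := by
    intro s hsT
    rw [hTdef, mem_filter] at hsT
    obtain ⟨hsS, hsf⟩ := hsT
    have hfs : 0 < f s := lt_trans (by positivity) hsf
    have hr1 : (1:ℝ) ≤ M / f s := (one_le_div hfs).mpr (hfleM s hsS)
    have hlog0 : 0 ≤ Real.logb 2 (M / f s) := Real.logb_nonneg one_lt_two hr1
    set k := ⌊Real.logb 2 (M / f s)⌋₊ with hkdef
    have hk1 : (k:ℝ) ≤ Real.logb 2 (M / f s) := Nat.floor_le hlog0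
    have hk2 : Real.logb 2 (M / f s) < (k:ℝ) + 1 := Nat.lt_floor_add_one _
    -- k ≤ K
    have hrlt : M / f s < (2:ℝ) ^ ((K:ℝ) + 1) := by
      have h2 : (0:ℝ) < (2:ℝ) ^ ((K:ℝ) + 1) := Real.rpow_pos_of_pos two_pos _
      have h3 : (2:ℝ) ^ (-(K:ℝ) - 1) = ((2:ℝ) ^ ((K:ℝ) + 1))⁻¹ := by
        rw [← Real.rpow_neg (by norm_num)]; ring_nf
      rw [div_lt_iff₀ hfs]
      rw [h3, inv_mul_lt_iff₀ h2] at hsf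
      nlinarith
    have hkK : k ≤ K := by
      have : Real.logb 2 (M / f s) < (K:ℝ) + 1 :=
        (Real.logb_lt_iff_lt_rpow one_lt_two (by positivity)).mpr hrlt
      have := lt_of_le_of_lt hk1 this
      exact_mod_cast Nat.lt_add_one_iff.mp (by exact_mod_cast this)
    refine Finset.mem_biUnion.mpr ⟨k, Finset.mem_range.mpr (Nat.lt_succ_of_le hkK), ?_⟩
    rw [hAdef]
    simp only [mem_filter]
    refine ⟨hsS, ?_, ?_⟩
    · -- 2^(-k-1) M < f s
      have : M / f s < (2:ℝ) ^ ((k:ℝ) + 1) :=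
        (Real.logb_lt_iff_lt_rpow one_lt_two (by positivity)).mp hk2
      have h2 : (0:ℝ) < (2:ℝ) ^ ((k:ℝ) + 1) := Real.rpow_pos_of_pos two_pos _
      have h3 : (2:ℝ) ^ (-(k:ℝ) - 1) = ((2:ℝ) ^ ((k:ℝ) + 1))⁻¹ := by
        rw [← Real.rpow_neg (by norm_num)]; ring_nf
      rw [div_lt_iff₀ hfs] at this
      rw [h3, inv_mul_lt_iff₀ h2]
      nlinarith
    · -- f s ≤ 2^(-k) M
      have : (2:ℝ) ^ (k:ℝ) ≤ M / f s := by
        calc (2:ℝ) ^ (k:ℝ) ≤ (2:ℝ) ^ Real.logb 2 (M / f s) :=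
          Real.rpow_le_rpow_of_exponent_le (by norm_num) hk1
        _ = M / f s := Real.rpow_logb two_pos (by norm_num) (by positivity)
      have h2 : (0:ℝ) < (2:ℝ) ^ ((k:ℝ)) := Real.rpow_pos_of_pos two_pos _
      have h3 : (2:ℝ) ^ (-(k:ℝ)) = ((2:ℝ) ^ ((k:ℝ)))⁻¹ := by
        rw [← Real.rpow_neg (by norm_num)]
      rw [le_div_iff₀ hfs] at this
      rw [h3, le_inv_mul_iff₀ h2]
      linarith
  -- the A k are pairwise disjoint
  have key : ∀ i j : ℕ, i < j → ∀ s, s ∈ A i → s ∈ A j → False := by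
    intro i j h s hsi hsj
    rw [hAdef, mem_filter] at hsi hsj
    have h1 : (2:ℝ) ^ (-(i:ℝ) - 1) * M < f s := hsi.2.1
    have h2 : f s ≤ (2:ℝ) ^ (-(j:ℝ)) * M := hsj.2.2
    have h3 : (2:ℝ) ^ (-(j:ℝ)) ≤ (2:ℝ) ^ (-(i:ℝ) - 1) := by
      apply Real.rpow_le_rpow_of_exponent_le (by norm_num)
      have : (i:ℝ) + 1 ≤ (j:ℝ) := by exact_mod_cast h
      linarith
    nlinarith [mul_le_mul_of_nonneg_right h3 (le_of_lt hMpos)]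
  have hdisj : Set.PairwiseDisjoint ↑(Finset.range (K+1)) A := by
    intro i _ j _ hij
    simp only [Function.onFun]
    rw [Finset.disjoint_left]
    intro s hsi hsj
    rcases lt_or_gt_of_ne hij with h | h
    · exact key i j h s hsi hsj
    · exact key j i h s hsj hsi
  -- split the total sum
  have hsplit : ∑ s ∈ S, f s =
      (∑ s ∈ T, f s) + ∑ s ∈ S.filter (fun s => ¬ ((2:ℝ) ^ (-(K:ℝ) - 1) * M < f s)), f s := by
    rw [hTdef]
    exact (Finset.sum_filter_add_sum_filter_not S _ f).symm
  -- tail sum bound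
  have htailsum : ∑ s ∈ S.filter (fun s => ¬ ((2:ℝ) ^ (-(K:ℝ) - 1) * M < f s)), f s
      < θ / 2 * M * (S.card : ℝ) := by
    have hb : ∀ s ∈ S.filter (fun s => ¬ ((2:ℝ) ^ (-(K:ℝ) - 1) * M < f s)), f s ≤
        (2:ℝ) ^ (-(K:ℝ) - 1) * M := by
      intro s hs
      rw [mem_filter] at hs
      exact not_lt.mp hs.2
    calc ∑ s ∈ S.filter (fun s => ¬ ((2:ℝ) ^ (-(K:ℝ) - 1) * M < f s)), f s
        ≤ (S.filter (fun s => ¬ ((2:ℝ) ^ (-(K:ℝ) - 1) * M < f s))).card •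
          ((2:ℝ) ^ (-(K:ℝ) - 1) * M) := Finset.sum_le_card_nsmul _ _ _ hb
      _ ≤ S.card • ((2:ℝ) ^ (-(K:ℝ) - 1) * M) := by
          apply nsmul_le_nsmul_left (by positivity)
          exact Finset.card_filter_le _ _
      _ = (S.card : ℝ) * ((2:ℝ) ^ (-(K:ℝ) - 1) * M) := by rw [nsmul_eq_mul]
      _ < (S.card : ℝ) * (θ / 2 * M) := by
          apply mul_lt_mul_of_pos_left _ hc
          exact mul_lt_mul_of_pos_right htail hMpos
      _ = θ / 2 * M * (S.card : ℝ) := by ring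
  -- heavy sum bound
  have hTsum : ∑ s ∈ T, f s ≤ θ / 2 * M * (S.card : ℝ) := by
    have h1 : ∑ s ∈ T, f s ≤ ∑ s ∈ (Finset.range (K+1)).biUnion A, f s := by
      apply Finset.sum_le_sum_of_subset_of_nonneg hTsub
      intro s hs _
      apply hnonneg
      rw [Finset.mem_biUnion] at hs
      obtain ⟨k, _, hk⟩ := hs
      rw [hAdef, mem_filter] at hk
      exact hk.1
    have h2 : ∑ s ∈ (Finset.range (K+1)).biUnion A, f s =
        ∑ k ∈ Finset.range (K+1), ∑ s ∈ A k, f s := Finset.sum_biUnion hdisj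
    have h3 : ∀ k ∈ Finset.range (K+1), ∑ s ∈ A k, f s ≤
        θ / 2 / Real.logb 2 (4/θ) * M * (S.card : ℝ) := by
      intro k hk
      rw [Finset.mem_range, Nat.lt_succ_iff] at hk
      have hstep : ∑ s ∈ A k, f s ≤ ((A k).card : ℝ) * ((2:ℝ) ^ (-(k:ℝ)) * M) := by
        have := Finset.sum_le_card_nsmul (A k) f ((2:ℝ) ^ (-(k:ℝ)) * M) (by
          intro s hs
          rw [hAdef, mem_filter] at hs
          exact hs.2.2)
        rwa [nsmul_eq_mul] at this
      have hAcard : ((A k).card : ℝ) ≤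
          (2:ℝ) ^ ((k:ℝ) - 1) * θ / Real.logb 2 (4/θ) * (S.card : ℝ) :=
        le_of_lt (hbound k hk)
      have hp : (0:ℝ) < (2:ℝ) ^ (-(k:ℝ)) * M := by positivity
      calc ∑ s ∈ A k, f s ≤ ((A k).card : ℝ) * ((2:ℝ) ^ (-(k:ℝ)) * M) := hstep
        _ ≤ ((2:ℝ) ^ ((k:ℝ) - 1) * θ / Real.logb 2 (4/θ) * (S.card : ℝ)) *
            ((2:ℝ) ^ (-(k:ℝ)) * M) := mul_le_mul_of_nonneg_right hAcard (le_of_lt hp)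
        _ = ((2:ℝ) ^ ((k:ℝ) - 1) * (2:ℝ) ^ (-(k:ℝ))) * θ / Real.logb 2 (4/θ) *
            (S.card : ℝ) * M := by ring
        _ = θ / 2 / Real.logb 2 (4/θ) * M * (S.card : ℝ) := by
            rw [← Real.rpow_add (by norm_num)]
            have he : (k:ℝ) - 1 + -(k:ℝ) = -1 := by ring
            rw [he, Real.rpow_neg_one]
            ring
    have h4 : ∑ k ∈ Finset.range (K+1), ∑ s ∈ A k, f s ≤
        ((K:ℝ)+1) * (θ / 2 / Real.logb 2 (4/θ) * M * (S.card : ℝ)) := by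
      calc ∑ k ∈ Finset.range (K+1), ∑ s ∈ A k, f s
          ≤ ∑ _k ∈ Finset.range (K+1), (θ / 2 / Real.logb 2 (4/θ) * M * (S.card : ℝ)) :=
            Finset.sum_le_sum h3
        _ = ((K:ℝ)+1) * (θ / 2 / Real.logb 2 (4/θ) * M * (S.card : ℝ)) := by
            rw [Finset.sum_const, Finset.card_range, nsmul_eq_mul]
            push_cast
            ring
    have h5 : ((K:ℝ)+1) ≤ Real.logb 2 (4/θ) := by rw [hL]; linarith
    have h6 : ((K:ℝ)+1) * (θ / 2 / Real.logb 2 (4/θ) * M * (S.card : ℝ)) ≤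
        θ / 2 * M * (S.card : ℝ) := by
      have hx : (0:ℝ) ≤ θ / 2 * M * (S.card : ℝ) := by positivity
      calc ((K:ℝ)+1) * (θ / 2 / Real.logb 2 (4/θ) * M * (S.card : ℝ))
          = (((K:ℝ)+1) / Real.logb 2 (4/θ)) * (θ / 2 * M * (S.card : ℝ)) := by ring
        _ ≤ 1 * (θ / 2 * M * (S.card : ℝ)) :=
            mul_le_mul_of_nonneg_right ((div_le_one hLpos).mpr h5) hx
        _ = θ / 2 * M * (S.card : ℝ) := one_mul _
    have h7 := h1.trans_eq h2
    linarith
  have hfinal : θ * M * (S.card : ℝ) = (∑ s ∈ T, f s) +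
      ∑ s ∈ S.filter (fun s => ¬ ((2:ℝ) ^ (-(K:ℝ) - 1) * M < f s)), f s := by
    rw [← hsum, hsplit]
  linarith
end

section
/- Let Z be an abelian group, let B ⊆ Z be finite and nonempty, and let G ⊆ B × B be nonempty. Then E(B) ≥ |G|² / (|−(G)| · |B|³). -/
open Finset Pointwise

/-- The additive energy `E(A) = |A|⁻³ · |{(a₁,a₂,a₃,a₄) ∈ A⁴ : a₁ − a₂ = a₃ − a₄}|`. -/
noncomputable def energy {Z : Type*} [AddCommGroup Z] [DecidableEq Z] (A : Finset Z) : ℝ :=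
  (((A ×ˢ A ×ˢ A ×ˢ A).filter
      (fun x => x.1 - x.2.1 = x.2.2.1 - x.2.2.2)).card : ℝ) / (A.card : ℝ) ^ 3

/-!
Split `G` into the fibres of the difference map `(a, b) ↦ a - b`. By Cauchy–Schwarz,
`|G|² ≤ |−(G)| · Σ_d |G_d|²`, and `Σ_d |G_d|²` counts pairs of elements of `G` with equal
difference. Since `G ⊆ B × B`, these pairs are among the pairs in `B × B` with equal difference,
which are exactly the additive quadruples of `B`, counted by `|B|³ E(B)`.
-/

namespace Finset

variable {α β : Type*} [DecidableEq β]

theorem sum_card_fiber_sq_eq_card_filter_eq (s : Finset α) (f : α → β) :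
    ∑ c ∈ s.image f, #{x ∈ s | f x = c} ^ 2 = #{p ∈ s ×ˢ s | f p.1 = f p.2} := by
  rw [card_eq_sum_card_fiberwise (f := fun p => f p.1) (t := s.image f)]
  · refine sum_congr rfl fun c _ => ?_
    rw [sq, ← card_product, filter_filter]
    congr 1
    ext ⟨x, y⟩
    simp only [mem_filter, mem_product]
    constructor
    · rintro ⟨⟨hx, rfl⟩, hy, hyx⟩
      exact ⟨⟨hx, hy⟩, hyx.symm, rfl⟩
    · rintro ⟨⟨hx, hy⟩, hxy, rfl⟩
      exact ⟨⟨hx, rfl⟩, hy, hxy.symm⟩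
  · intro p hp
    exact mem_image_of_mem f (mem_product.1 (mem_filter.1 hp).1).1

theorem card_sq_le_card_image_mul_card_filter_eq (s : Finset α) (f : α → β) :
    #s ^ 2 ≤ #(s.image f) * #{p ∈ s ×ˢ s | f p.1 = f p.2} := by
  calc #s ^ 2 = (∑ c ∈ s.image f, #{x ∈ s | f x = c}) ^ 2 := by
        rw [card_eq_sum_card_image f s]
    _ ≤ #(s.image f) * ∑ c ∈ s.image f, #{x ∈ s | f x = c} ^ 2 := sq_sum_le_card_mul_sum_sq
    _ = #(s.image f) * #{p ∈ s ×ˢ s | f p.1 = f p.2} := by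
        rw [sum_card_fiber_sq_eq_card_filter_eq]

end Finset

theorem energy_eq_card_filter_sub_eq_div {Z : Type*} [AddCommGroup Z] [DecidableEq Z]
    (A : Finset Z) :
    energy A = #{p ∈ (A ×ˢ A) ×ˢ (A ×ˢ A) | p.1.1 - p.1.2 = p.2.1 - p.2.2} / (#A : ℝ) ^ 3 := by
  rw [energy, card_equiv (Equiv.prodAssoc Z Z (Z × Z)).symm]
  simp [and_assoc]

theorem statement7_general {Z : Type*} [AddCommGroup Z] [DecidableEq Z]
    (B : Finset Z) (G : Finset (Z × Z))
    (hGB : G ⊆ B ×ˢ B) :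
    (G.card : ℝ) ^ 2 / (((G.image (fun p => p.1 - p.2)).card : ℝ) * (B.card : ℝ) ^ 3)
      ≤ energy B := by
  have key : (#G : ℝ) ^ 2 ≤ #(G.image fun p => p.1 - p.2) *
      #{p ∈ (B ×ˢ B) ×ˢ (B ×ˢ B) | p.1.1 - p.1.2 = p.2.1 - p.2.2} := by
    exact_mod_cast (card_sq_le_card_image_mul_card_filter_eq G _).trans <|
      Nat.mul_le_mul_left _ <| card_le_card <| filter_subset_filter _ <|
        product_subset_product hGB hGB
  rw [energy_eq_card_filter_sub_eq_div, div_mul_eq_div_div]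
  gcongr
  exact div_le_of_le_mul₀ (by positivity) (by positivity) (by rwa [mul_comm])

/-- For nonempty `G ⊆ B × B`, `E(B) ≥ |G|²/(|−(G)|·|B|³)`, where `−(G) = {a − b : (a,b) ∈ G}`. -/
theorem statement7 {Z : Type*} [AddCommGroup Z] [DecidableEq Z]
    (B : Finset Z) (hB : B.Nonempty) (G : Finset (Z × Z)) (hG : G.Nonempty)
    (hGB : G ⊆ B ×ˢ B) :
    (G.card : ℝ) ^ 2 / (((G.image (fun p => p.1 - p.2)).card : ℝ) * (B.card : ℝ) ^ 3)
      ≤ energy B :=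
  statement7_general B G hGB
end

section
/- Let Z be an abelian group, let A ⊆ Z be finite and nonempty, and let K ≥ 1 be a real number with |A − A| ≤ K|A|. Then |{(a, a′) ∈ A × A : |A[a − a′]| ≥ |A|/(2K)}| ≥ |A|²/2. -/
open Finset Pointwise
open scoped Classical

/-!
The pairs in `A × A` with difference `t` are in bijection with `A[t]`, so for each `t ∈ A − A`
at most `τ` pairs have a difference `t` with `|A[t]| < τ`. With `τ = |A|/(2K)` the bad pairs
therefore number at most `τ |A − A| ≤ |A|²/2`.
-/

/-- `A[t] = (A + t) ∩ A`. -/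
def shiftInter {Z : Type*} [AddCommGroup Z] [DecidableEq Z] (A : Finset Z) (t : Z) : Finset Z :=
  (A.image (fun a => a + t)) ∩ A

section

variable {Z : Type*} [AddCommGroup Z] [DecidableEq Z]

theorem card_filter_sub_eq_card_shiftInter (A : Finset Z) (t : Z) :
    #((A ×ˢ A).filter (fun p => p.1 - p.2 = t)) = #(shiftInter A t) := by
  refine card_nbij' Prod.fst (fun a => (a, a - t)) ?_ ?_ ?_ ?_
  · rintro ⟨a, b⟩ hab
    rw [mem_coe, mem_filter, mem_product] at hab
    obtain ⟨⟨ha, hb⟩, rfl⟩ := hab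
    rw [mem_coe, shiftInter, mem_inter, mem_image]
    exact ⟨⟨b, hb, by abel⟩, ha⟩
  · intro a ha
    rw [mem_coe, shiftInter, mem_inter, mem_image] at ha
    obtain ⟨⟨b, hb, rfl⟩, hbt⟩ := ha
    simpa using ⟨hbt, hb⟩
  · rintro ⟨a, b⟩ hab
    rw [mem_coe, mem_filter] at hab
    simp [← hab.2]
  · intro a _
    rfl

theorem card_filter_card_shiftInter_lt_le (A : Finset Z) {τ : ℝ} (hτ : 0 ≤ τ) :
    (#((A ×ˢ A).filter (fun p => (#(shiftInter A (p.1 - p.2)) : ℝ) < τ)) : ℝ) ≤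
      τ * #(A - A) := by
  set bad := (A ×ˢ A).filter (fun p => (#(shiftInter A (p.1 - p.2)) : ℝ) < τ)
  have hfiber (t : Z) : (#(bad.filter (fun p => p.1 - p.2 = t)) : ℝ) ≤ τ := by
    by_cases ht : (#(shiftInter A t) : ℝ) < τ
    · refine le_trans ?_ ht.le
      rw [← card_filter_sub_eq_card_shiftInter]
      exact_mod_cast card_le_card (filter_subset_filter _ (filter_subset _ _))
    · rw [filter_eq_empty_iff.mpr fun p hp hpt => ht (by simpa [hpt] using (mem_filter.mp hp).2)]
      simpa using hτ
  have hmaps : ∀ p ∈ bad, p.1 - p.2 ∈ A - A := fun p hp => by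
    rw [mem_filter, mem_product] at hp
    exact sub_mem_sub hp.1.1 hp.1.2
  calc (#bad : ℝ) = ∑ t ∈ A - A, (#(bad.filter (fun p => p.1 - p.2 = t)) : ℝ) := by
        exact_mod_cast card_eq_sum_card_fiberwise hmaps
    _ ≤ ∑ _t ∈ A - A, τ := sum_le_sum fun t _ => hfiber t
    _ = τ * #(A - A) := by rw [sum_const, nsmul_eq_mul, mul_comm]

end

theorem statement8_general {Z : Type*} [AddCommGroup Z] [DecidableEq Z]
    (A : Finset Z) (K : ℝ) (hK : 1 ≤ K)
    (hdoub : ((A - A).card : ℝ) ≤ K * (A.card : ℝ)) :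
    (A.card : ℝ) ^ 2 / 2 ≤
      (((A ×ˢ A).filter
        (fun p => (A.card : ℝ) / (2 * K) ≤ ((shiftInter A (p.1 - p.2)).card : ℝ))).card : ℝ) := by
  set τ : ℝ := (A.card : ℝ) / (2 * K)
  have hK₀ : 0 < K := one_pos.trans_le hK
  have hτ : 0 ≤ τ := by positivity
  have hsplit := card_filter_add_card_filter_not (s := A ×ˢ A)
    (fun p => τ ≤ (#(shiftInter A (p.1 - p.2)) : ℝ))
  simp_rw [not_le, card_product, ← sq] at hsplit
  have hcast := congrArg (Nat.cast : ℕ → ℝ) hsplit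
  push_cast at hcast
  have hbad := card_filter_card_shiftInter_lt_le A hτ
  have hτK : τ * #(A - A) ≤ (A.card : ℝ) ^ 2 / 2 :=
    calc τ * #(A - A) ≤ τ * (K * A.card) := mul_le_mul_of_nonneg_left hdoub hτ
      _ = (A.card : ℝ) ^ 2 / 2 := by simp only [τ]; field_simp
  linarith

/-- If `|A − A| ≤ K|A|` with `K ≥ 1`, then
`|{(a,a′) ∈ A × A : |A[a − a′]| ≥ |A|/(2K)}| ≥ |A|²/2`. -/
theorem statement8 {Z : Type*} [AddCommGroup Z] [DecidableEq Z]
    (A : Finset Z) (hA : A.Nonempty) (K : ℝ) (hK : 1 ≤ K)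
    (hdoub : ((A - A).card : ℝ) ≤ K * (A.card : ℝ)) :
    (A.card : ℝ) ^ 2 / 2 ≤
      (((A ×ˢ A).filter
        (fun p => (A.card : ℝ) / (2 * K) ≤ ((shiftInter A (p.1 - p.2)).card : ℝ))).card : ℝ) :=
  statement8_general A K hK hdoub
end

section
/- Let Z be an abelian group, let A ⊆ Z be finite and nonempty, let K ≥ 1 be the real number with |A − A| = K|A|, let 0 ≤ ε ≤ 1, and suppose E(A) ≤ K^{−(1−ε)}. Then |{t ∈ A − A : |A[t]| ≥ |A|/(2K)}| ≥ (1/4) · K^{1−ε} · |A|. -/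
open Finset Pointwise
open scoped Classical

/-!
Since `|A[t]|` counts the pairs `(a, b) ∈ A²` with `a - b = t`, we have `∑ₜ |A[t]| = |A|²` and
`∑ₜ |A[t]|² = E(A)|A|³`, sums over `t ∈ A − A`. The differences with `|A[t]| < |A|/(2K)` contribute
less than `|A − A| · |A|/(2K) = |A|²/2` to the first sum, so the popular ones carry at least `|A|²/2`,
and Cauchy–Schwarz over them gives `|A|⁴/4 ≤ #popular · E(A)|A|³ ≤ #popular · K^{-(1-ε)}|A|³`.
-/

lemma sq_sum_sub_le_card_filter_mul_sum_sq {ι : Type*} (s : Finset ι) (f : ι → ℝ) {θ : ℝ}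
    (hθ : 0 ≤ θ) (hsum : #s * θ ≤ ∑ i ∈ s, f i) :
    (∑ i ∈ s, f i - #s * θ) ^ 2 ≤ #{i ∈ s | θ ≤ f i} * ∑ i ∈ s, f i ^ 2 := by
  have hsmall : ∑ i ∈ s with ¬θ ≤ f i, f i ≤ #s * θ :=
    calc ∑ i ∈ s with ¬θ ≤ f i, f i ≤ ∑ i ∈ s with ¬θ ≤ f i, θ :=
          sum_le_sum fun i hi => (not_le.mp (mem_filter.mp hi).2).le
      _ ≤ #s * θ := by
          rw [sum_const, nsmul_eq_mul]
          exact mul_le_mul_of_nonneg_right (by exact_mod_cast card_filter_le _ _) hθ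
  have hlarge : ∑ i ∈ s, f i - #s * θ ≤ ∑ i ∈ s with θ ≤ f i, f i := by
    linarith [sum_filter_add_sum_filter_not s (fun i => θ ≤ f i) f]
  calc (∑ i ∈ s, f i - #s * θ) ^ 2 ≤ (∑ i ∈ s with θ ≤ f i, f i) ^ 2 :=
        pow_le_pow_left₀ (sub_nonneg.mpr hsum) hlarge 2
    _ ≤ #{i ∈ s | θ ≤ f i} * ∑ i ∈ s with θ ≤ f i, f i ^ 2 := sq_sum_le_card_mul_sum_sq
    _ ≤ #{i ∈ s | θ ≤ f i} * ∑ i ∈ s, f i ^ 2 := by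
        gcongr
        exact filter_subset _ s

section

variable {Z : Type*} [AddCommGroup Z] [DecidableEq Z] (A : Finset Z)

lemma card_shiftInter (t : Z) : #(shiftInter A t) = #{p ∈ A ×ˢ A | p.1 - p.2 = t} := by
  refine card_nbij' (fun x => (x, x - t)) Prod.fst ?_ ?_ (fun _ _ => rfl) ?_
  · intro x hx
    obtain ⟨hxt, hx⟩ := mem_inter.mp hx
    obtain ⟨a, ha, rfl⟩ := mem_image.mp hxt
    simpa [ha] using hx
  · rintro ⟨a, b⟩ hab
    simp only [coe_filter, mem_product, Set.mem_ofPred_eq] at hab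
    obtain ⟨⟨ha, hb⟩, rfl⟩ := hab
    simp only [mem_coe, shiftInter, mem_inter, mem_image]
    exact ⟨⟨b, hb, by abel⟩, ha⟩
  · rintro ⟨a, b⟩ hab
    simp only [coe_filter, mem_product, Set.mem_ofPred_eq] at hab
    obtain ⟨-, rfl⟩ := hab
    simp

lemma sum_card_shiftInter : ∑ t ∈ A - A, #(shiftInter A t) = #A ^ 2 := by
  simp_rw [card_shiftInter, sq, ← card_product]
  exact (card_eq_sum_card_fiberwise fun p hp =>
    sub_mem_sub (mem_product.mp hp).1 (mem_product.mp hp).2).symm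

lemma sum_card_shiftInter_sq :
    ∑ t ∈ A - A, #(shiftInter A t) ^ 2 =
      #{x ∈ A ×ˢ A ×ˢ A ×ˢ A | x.1 - x.2.1 = x.2.2.1 - x.2.2.2} := by
  rw [card_eq_sum_card_fiberwise (f := fun x => x.1 - x.2.1) (t := A - A) fun x hx => by
    simp only [coe_filter, mem_product, Set.mem_ofPred_eq] at hx
    exact sub_mem_sub hx.1.1 hx.1.2.1]
  refine sum_congr rfl fun t _ => ?_
  rw [card_shiftInter, sq, ← card_product]
  refine card_nbij' (fun p => (p.1.1, p.1.2, p.2.1, p.2.2))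
    (fun x => ((x.1, x.2.1), (x.2.2.1, x.2.2.2))) ?_ ?_ (fun _ _ => rfl) (fun _ _ => rfl)
  · rintro ⟨⟨a₁, a₂⟩, ⟨a₃, a₄⟩⟩ h
    simp only [coe_product, coe_filter, Set.mem_prod, mem_filter, mem_product,
      Set.mem_ofPred_eq] at h ⊢
    obtain ⟨⟨⟨h₁, h₂⟩, rfl⟩, ⟨h₃, h₄⟩, h⟩ := h
    exact ⟨⟨⟨h₁, h₂, h₃, h₄⟩, h.symm⟩, rfl⟩
  · rintro ⟨a₁, a₂, a₃, a₄⟩ h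
    simp only [coe_product, coe_filter, Set.mem_prod, mem_filter, mem_product,
      Set.mem_ofPred_eq] at h ⊢
    obtain ⟨⟨⟨h₁, h₂, h₃, h₄⟩, h⟩, rfl⟩ := h
    exact ⟨⟨⟨h₁, h₂⟩, rfl⟩, ⟨h₃, h₄⟩, h.symm⟩

end

theorem statement9_general {Z : Type*} [AddCommGroup Z] [DecidableEq Z]
    (A : Finset Z) (hA : A.Nonempty) (K : ℝ) (hK : 1 ≤ K)
    (hKdef : ((A - A).card : ℝ) = K * (A.card : ℝ))
    (ε : ℝ)
    (hE : energy A ≤ K ^ (-(1 - ε))) :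
    (1/4 : ℝ) * K ^ (1 - ε) * (A.card : ℝ) ≤
      (((A - A).filter
        (fun t => (A.card : ℝ) / (2 * K) ≤ ((shiftInter A t).card : ℝ))).card : ℝ) := by
  have hK₀ : 0 < K := one_pos.trans_le hK
  have hA₀ : (0 : ℝ) < #A := by exact_mod_cast hA.card_pos
  have hthreshold : (#(A - A) : ℝ) * (#A / (2 * K)) = #A ^ 2 / 2 := by
    rw [hKdef]; field_simp
  have hsum : ∑ t ∈ A - A, (#(shiftInter A t) : ℝ) = #A ^ 2 := by
    exact_mod_cast sum_card_shiftInter A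
  have hsum_sq : ∑ t ∈ A - A, (#(shiftInter A t) : ℝ) ^ 2 = energy A * #A ^ 3 := by
    rw [energy, div_mul_cancel₀ _ (by positivity)]
    exact_mod_cast sum_card_shiftInter_sq A
  have key := sq_sum_sub_le_card_filter_mul_sum_sq (A - A) (fun t => (#(shiftInter A t) : ℝ))
    (θ := #A / (2 * K)) (by positivity) (by rw [hthreshold, hsum]; linarith [sq_nonneg (#A : ℝ)])
  rw [hthreshold, hsum, hsum_sq] at key
  have hE_mul : energy A * K ^ (1 - ε) ≤ 1 := by
    rw [Real.rpow_neg hK₀.le] at hE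
    exact (le_inv_mul_iff₀' (by positivity)).mp (by simpa using hE)
  rw [← mul_le_mul_iff_of_pos_right (pow_pos hA₀ 3)]
  calc _ = (#A ^ 2 - #A ^ 2 / 2 : ℝ) ^ 2 * K ^ (1 - ε) := by ring
    _ ≤ _ * (energy A * #A ^ 3) * K ^ (1 - ε) := by gcongr
    _ = _ * #A ^ 3 * (energy A * K ^ (1 - ε)) := by ring
    _ ≤ _ := mul_le_of_le_one_right (by positivity) hE_mul

/-- If `|A − A| = K|A|` with `K ≥ 1`, `0 ≤ ε ≤ 1` and `E(A) ≤ K^{−(1−ε)}`, then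
`|{t ∈ A − A : |A[t]| ≥ |A|/(2K)}| ≥ (1/4)·K^{1−ε}·|A|`. -/
theorem statement9 {Z : Type*} [AddCommGroup Z] [DecidableEq Z]
    (A : Finset Z) (hA : A.Nonempty) (K : ℝ) (hK : 1 ≤ K)
    (hKdef : ((A - A).card : ℝ) = K * (A.card : ℝ))
    (ε : ℝ) (hε0 : 0 ≤ ε) (hε1 : ε ≤ 1)
    (hE : energy A ≤ K ^ (-(1 - ε))) :
    (1/4 : ℝ) * K ^ (1 - ε) * (A.card : ℝ) ≤
      (((A - A).filter
        (fun t => (A.card : ℝ) / (2 * K) ≤ ((shiftInter A t).card : ℝ))).card : ℝ) :=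
  statement9_general A hA K hK hKdef ε hE
end

section
/- Let Z be an abelian group, let A ⊆ Z be finite and nonempty, let K ≥ 2 be the real number with |A − A| = K|A|, let 0 ≤ ε ≤ 1 and 0 ≤ β ≤ 1, and let T ⊆ A − A be a nonempty set with |T| ≥ K^{−ε}|A − A| and |A[t] − A| ≥ K^β |A| for all t ∈ T. Then there exist a real number α with α ≤ 1 + ε − β and a set X ⊆ A − A such that: (i) |{t ∈ T : x ∈ A[t] − A}| ≥ K^{α+β−ε} |A| for every x ∈ X; and (ii) |X| ≥ K^{−α} |A − A| / (4 log₂(4K²)). -/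
/-!
For `x ∈ A − A` let `f x` count the `t ∈ T` with `x ∈ A[t] − A`. Double counting gives
`∑ f = ∑_{t ∈ T} |A[t] − A| ≥ K^{β−ε} |A − A| |A|`, while `f ≤ |T| ≤ |A − A|`. Splitting the range
of `f` dyadically below `|A − A|`, the values under `|A − A| / 2^L` with `2^L ≈ 2K²` carry at most
half of that sum, so one of the `L ≤ log₂(4K²)` superlevel sets `X = {f ≥ τ}` carries a `1/(2L)`
share of it. Finally `α` is defined by `K^{α+β−ε} |A| = τ`, and `τ ≤ |A − A|` gives
`α ≤ 1 + ε − β`.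
-/

open Finset Pointwise
open scoped Classical

section DyadicPigeonhole

variable {ι : Type*}

/-- Dyadic layer cake: if `y ∈ [M/2^j, M/2^(j-1))` with `j ≤ L`, the right-hand side equals
`M/2^(j-1)`. -/
theorem le_div_two_pow_add_sum_ite {M y : ℝ} (hM : 0 ≤ M) (hy : y ≤ M) (L : ℕ) :
    y ≤ M / 2 ^ L + ∑ i ∈ range L, if M / 2 ^ (i + 1) ≤ y then M / 2 ^ (i + 1) else 0 := by
  induction L with
  | zero => simpa using hy
  | succ L ih =>
    have hsum : 0 ≤ ∑ i ∈ range L, if M / 2 ^ (i + 1) ≤ y then M / 2 ^ (i + 1) else 0 :=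
      sum_nonneg fun i _ => by split_ifs <;> positivity
    have hhalf : M / 2 ^ (L + 1) + M / 2 ^ (L + 1) = M / 2 ^ L := by
      rw [pow_succ]; field_simp; ring
    rw [sum_range_succ]
    split_ifs with h <;> linarith

theorem sum_le_card_mul_add_sum_card_superlevel (s : Finset ι) (f : ι → ℝ) {M : ℝ}
    (hM : 0 ≤ M) (hf : ∀ x ∈ s, f x ≤ M) (L : ℕ) :
    ∑ x ∈ s, f x ≤
      #s * (M / 2 ^ L) + ∑ i ∈ range L, #{x ∈ s | M / 2 ^ (i + 1) ≤ f x} * (M / 2 ^ (i + 1)) := by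
  calc ∑ x ∈ s, f x
      ≤ ∑ x ∈ s, (M / 2 ^ L +
          ∑ i ∈ range L, if M / 2 ^ (i + 1) ≤ f x then M / 2 ^ (i + 1) else 0) :=
        sum_le_sum fun x hx => le_div_two_pow_add_sum_ite hM (hf x hx) L
    _ = _ := by
        rw [sum_add_distrib, sum_const, nsmul_eq_mul, sum_comm]
        congr 1
        refine sum_congr rfl fun i _ => ?_
        rw [← sum_filter, sum_const, nsmul_eq_mul]

theorem exists_sum_sub_le_mul_card_superlevel (s : Finset ι) (f : ι → ℝ) {M : ℝ}
    (hM : 0 ≤ M) (hf : ∀ x ∈ s, f x ≤ M) {L : ℕ} (hL : 0 < L) :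
    ∃ i : ℕ, ∑ x ∈ s, f x - #s * (M / 2 ^ L) ≤
      L * (#{x ∈ s | M / 2 ^ (i + 1) ≤ f x} * (M / 2 ^ (i + 1))) := by
  have hsum := sum_le_card_mul_add_sum_card_superlevel s f hM hf L
  obtain ⟨i, -, hi⟩ := exists_le_of_sum_le (nonempty_range_iff.mpr hL.ne')
    (f := fun _ => (∑ x ∈ s, f x - #s * (M / 2 ^ L)) / L)
    (g := fun i => #{x ∈ s | M / 2 ^ (i + 1) ≤ f x} * (M / 2 ^ (i + 1)))
    (by rw [sum_const, card_range, nsmul_eq_mul, mul_div_cancel₀ _ (by positivity)]; linarith)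
  exact ⟨i, by rwa [div_le_iff₀' (by positivity)] at hi⟩

theorem exists_le_two_pow_and_le_logb_two_mul {x : ℝ} (hx : 1 < x) :
    ∃ L : ℕ, 0 < L ∧ x ≤ 2 ^ L ∧ (L : ℝ) ≤ Real.logb 2 (2 * x) := by
  have hlog : 0 < Real.logb 2 x := Real.logb_pos one_lt_two hx
  refine ⟨⌈Real.logb 2 x⌉₊, Nat.ceil_pos.mpr hlog, ?_, ?_⟩
  · rw [← Real.rpow_natCast, ← Real.logb_le_iff_le_rpow one_lt_two (by linarith)]
    exact Nat.le_ceil _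
  · rw [Real.logb_mul two_ne_zero (by linarith), Real.logb_self_eq_one one_lt_two, add_comm]
    exact (Nat.ceil_lt_add_one hlog.le).le

theorem exists_le_two_mul_logb_mul_card_superlevel (s : Finset ι) (f : ι → ℝ) {M W R : ℝ}
    (hf : ∀ x ∈ s, f x ≤ M) (hW0 : 0 < W) (hW : W ≤ ∑ x ∈ s, f x) (hR : 4 * #s * M ≤ R * W) :
    ∃ τ, 0 < τ ∧ τ ≤ M ∧ W ≤ 2 * Real.logb 2 R * (#{x ∈ s | τ ≤ f x} * τ) := by
  have hsM : W ≤ #s * M := hW.trans <| by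
    simpa [sum_const, nsmul_eq_mul] using sum_le_sum hf
  have hM : 0 < M := pos_of_mul_pos_right (hW0.trans_le hsM) (by positivity)
  have hx : 1 < 2 * #s * M / W := by rw [lt_div_iff₀ hW0]; linarith
  obtain ⟨L, hL, hxL, hLlog⟩ := exists_le_two_pow_and_le_logb_two_mul hx
  have hLR : (L : ℝ) ≤ Real.logb 2 R := hLlog.trans <|
    Real.logb_le_logb_of_le one_lt_two (by linarith)
      (by rw [← mul_div_assoc, div_le_iff₀ hW0]; linarith)
  obtain ⟨i, hi⟩ := exists_sum_sub_le_mul_card_superlevel s f hM.le hf hL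
  have hrem : #s * (M / 2 ^ L) ≤ W / 2 := by
    rw [div_le_iff₀ hW0] at hxL
    rw [mul_div_assoc', div_le_iff₀ (by positivity)]
    nlinarith
  refine ⟨M / 2 ^ (i + 1), by positivity, div_le_self hM.le (one_le_pow₀ one_le_two), ?_⟩
  nlinarith [mul_le_mul_of_nonneg_right hLR
    (by positivity : (0 : ℝ) ≤ #{x ∈ s | M / 2 ^ (i + 1) ≤ f x} * (M / 2 ^ (i + 1)))]

end DyadicPigeonhole

theorem sum_card_filter_mem_eq_sum_card {α β : Type*} [DecidableEq α] (S : Finset α)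
    (T : Finset β) (D : β → Finset α) (hD : ∀ t ∈ T, D t ⊆ S) :
    ∑ x ∈ S, #{t ∈ T | x ∈ D t} = ∑ t ∈ T, #(D t) := by
  refine (sum_card_bipartiteAbove_eq_sum_card_bipartiteBelow (fun x t => x ∈ D t)).trans ?_
  refine sum_congr rfl fun t ht => ?_
  rw [bipartiteBelow, filter_mem_eq_inter, inter_eq_right.mpr (hD t ht)]

theorem shiftInter_sub_subset {Z : Type*} [AddCommGroup Z] [DecidableEq Z] (A : Finset Z) (t : Z) :
    shiftInter A t - A ⊆ A - A :=
  sub_subset_sub inter_subset_right Subset.rfl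

theorem rpow_mul_card_mul_card_le_sum_card_filter {Z : Type*} [AddCommGroup Z] [DecidableEq Z]
    (A T : Finset Z) {K ε β : ℝ} (hK : 0 < K)
    (hTcard : K ^ (-ε) * (#(A - A) : ℝ) ≤ #T)
    (hTbig : ∀ t ∈ T, K ^ β * (#A : ℝ) ≤ #(shiftInter A t - A)) :
    K ^ (β - ε) * #(A - A) * #A ≤ ∑ x ∈ A - A, (#{t ∈ T | x ∈ shiftInter A t - A} : ℝ) := by
  rw [← Nat.cast_sum, sum_card_filter_mem_eq_sum_card _ _ _ fun t _ => shiftInter_sub_subset A t,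
    Nat.cast_sum]
  calc K ^ (β - ε) * #(A - A) * #A = K ^ (-ε) * #(A - A) * (K ^ β * #A) := by
        rw [sub_eq_neg_add, Real.rpow_add hK]; ring
    _ ≤ #T * (K ^ β * #A) := by gcongr
    _ = ∑ t ∈ T, K ^ β * (#A : ℝ) := by rw [sum_const, nsmul_eq_mul]
    _ ≤ _ := sum_le_sum hTbig

theorem statement11_general {Z : Type*} [AddCommGroup Z] [DecidableEq Z]
    (A : Finset Z) (hA : A.Nonempty) (K : ℝ) (hK : 2 ≤ K)
    (hKdef : ((A - A).card : ℝ) = K * (A.card : ℝ))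
    (ε β : ℝ) (hε1 : ε ≤ 1) (hβ0 : 0 ≤ β)
    (T : Finset Z) (hTsub : T ⊆ A - A)
    (hTcard : K ^ (-ε) * ((A - A).card : ℝ) ≤ (T.card : ℝ))
    (hTbig : ∀ t ∈ T, K ^ β * (A.card : ℝ) ≤ (((shiftInter A t) - A).card : ℝ)) :
    ∃ (α : ℝ) (X : Finset Z), α ≤ 1 + ε - β ∧ X ⊆ A - A ∧
      (∀ x ∈ X, K ^ (α + β - ε) * (A.card : ℝ) ≤
        ((T.filter (fun t => x ∈ (shiftInter A t) - A)).card : ℝ)) ∧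
      K ^ (-α) * ((A - A).card : ℝ) / (4 * Real.logb 2 (4 * K ^ 2)) ≤ (X.card : ℝ) := by
  have hK0 : 0 < K := by linarith
  have hn : (0 : ℝ) < #A := by exact_mod_cast hA.card_pos
  set f : Z → ℝ := fun x => #{t ∈ T | x ∈ shiftInter A t - A}
  have hf : ∀ x ∈ A - A, f x ≤ #(A - A) := fun x _ => by
    simp only [f]
    exact_mod_cast (card_filter_le _ _).trans (card_le_card hTsub)
  have hKβε : 1 ≤ K ^ (β - ε) * K := by
    rw [← Real.rpow_add_one hK0.ne']
    exact Real.one_le_rpow (by linarith) (by linarith)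
  obtain ⟨τ, hτ0, hτ, hW⟩ := exists_le_two_mul_logb_mul_card_superlevel (A - A) f hf
    (by rw [hKdef]; positivity) (rpow_mul_card_mul_card_le_sum_card_filter A T hK0 hTcard hTbig)
    (R := 4 * K ^ 2) (by
      rw [hKdef]
      nlinarith [mul_le_mul_of_nonneg_left hKβε (by positivity : 0 ≤ 4 * K ^ 2 * #A ^ 2)])
  set X := {x ∈ A - A | τ ≤ f x}
  have hlog : 0 < Real.logb 2 (4 * K ^ 2) := Real.logb_pos one_lt_two (by nlinarith)
  refine ⟨Real.logb K (τ / #A) - β + ε, X, ?_, filter_subset _ _, fun x hx => ?_, ?_⟩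
  · have : τ / #A ≤ K := by rw [div_le_iff₀ hn, ← hKdef]; exact hτ
    linarith [(Real.logb_le_logb_of_le (by linarith) (by positivity) this).trans
      (Real.logb_self_eq_one (by linarith)).le]
  · rw [show Real.logb K (τ / #A) - β + ε + β - ε = Real.logb K (τ / #A) by ring,
      Real.rpow_logb hK0 (by linarith) (by positivity), div_mul_cancel₀ _ hn.ne']
    exact (mem_filter.mp hx).2
  · rw [show -(Real.logb K (τ / #A) - β + ε) = β - ε - Real.logb K (τ / #A) by ring,
      Real.rpow_sub hK0, Real.rpow_logb hK0 (by linarith) (by positivity),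
      div_le_iff₀ (by positivity)]
    calc K ^ (β - ε) / (τ / #A) * #(A - A) = K ^ (β - ε) * #(A - A) * #A / τ := by
          field_simp
      _ ≤ 2 * Real.logb 2 (4 * K ^ 2) * #X := by rw [div_le_iff₀ hτ0]; linarith
      _ ≤ #X * (4 * Real.logb 2 (4 * K ^ 2)) := by nlinarith

/-- If `|A − A| = K|A|` with `K ≥ 2`, and `T ⊆ A − A` is nonempty with `|T| ≥ K^{−ε}|A − A|`
and `|A[t] − A| ≥ K^β|A|` for all `t ∈ T`, then there are `α ≤ 1 + ε − β` and `X ⊆ A − A` with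
`|{t ∈ T : x ∈ A[t] − A}| ≥ K^{α+β−ε}|A|` for every `x ∈ X`, and
`|X| ≥ K^{−α}|A − A|/(4 log₂(4K²))`. -/
theorem statement11 {Z : Type*} [AddCommGroup Z] [DecidableEq Z]
    (A : Finset Z) (hA : A.Nonempty) (K : ℝ) (hK : 2 ≤ K)
    (hKdef : ((A - A).card : ℝ) = K * (A.card : ℝ))
    (ε β : ℝ) (hε0 : 0 ≤ ε) (hε1 : ε ≤ 1) (hβ0 : 0 ≤ β) (hβ1 : β ≤ 1)
    (T : Finset Z) (hT : T.Nonempty) (hTsub : T ⊆ A - A)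
    (hTcard : K ^ (-ε) * ((A - A).card : ℝ) ≤ (T.card : ℝ))
    (hTbig : ∀ t ∈ T, K ^ β * (A.card : ℝ) ≤ (((shiftInter A t) - A).card : ℝ)) :
    ∃ (α : ℝ) (X : Finset Z), α ≤ 1 + ε - β ∧ X ⊆ A - A ∧
      (∀ x ∈ X, K ^ (α + β - ε) * (A.card : ℝ) ≤
        ((T.filter (fun t => x ∈ (shiftInter A t) - A)).card : ℝ)) ∧
      K ^ (-α) * ((A - A).card : ℝ) / (4 * Real.logb 2 (4 * K ^ 2)) ≤ (X.card : ℝ) :=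
  statement11_general A hA K hK hKdef ε β hε1 hβ0 T hTsub hTcard hTbig
end

section
/- Let Z be an abelian group, let A ⊆ Z be finite and nonempty, let B ⊆ A be nonempty, let K ≥ 2 and β ≥ 0 be real numbers with |B − A| ≤ K^β |A|. Then there exist a real number α ≤ β and a set G ⊆ B × B such that: (i) |((a − a′) + A) ∩ A| ≥ K^{α−β} |A| for every (a, a′) ∈ G; and (ii) |G| ≥ K^{−α} |B|² / (4 log₂(4 K^β)). -/
/-!
By Cauchy–Schwarz, the weights `r(a, a') = |((a − a') + A) ∩ A|` sum over `B × B` to the additive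
energy `E(B, −A) ≥ |B|²|A|²/|B − A| ≥ K^{−β}|B|²|A|`. Pairs of weight at most `|A|/2^M`, where
`2^M ≥ 2K^β`, carry at most half of this mass, so one of the `M ≤ log₂(4K^β)` dyadic levels above
that threshold carries a `1/(2M)` share; if it is level `i`, take `K^{α−β} = 2^{−(i+1)}`.
-/

open Finset Pointwise
open scoped Classical

namespace Finset

variable {α : Type*} [AddCommGroup α] [DecidableEq α]

lemma addEnergy_neg_right_eq_sum (s t : Finset α) :
    addEnergy s (-t) = ∑ p ∈ s ×ˢ s, #((t.image (p.1 - p.2 + ·)) ∩ t) := by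
  rw [addEnergy, card_filter, sum_product]
  refine sum_congr rfl fun x _ => ?_
  rw [← card_filter]
  refine card_nbij' (fun c => -c.1) (fun z => (-z, -(z - (x.1 - x.2)))) ?_ ?_ ?_ ?_
  · rintro ⟨c₁, c₂⟩ hc
    simp only [coe_filter, mem_product, mem_neg', Set.mem_ofPred_eq] at hc
    obtain ⟨⟨h₁, h₂⟩, heq⟩ := hc
    have : c₂ = x.1 - x.2 + c₁ := by rw [sub_add_eq_add_sub, heq]; abel
    simp only [coe_inter, coe_image, Set.mem_inter_iff, Set.mem_image, mem_coe]
    exact ⟨⟨-c₂, h₂, by rw [this]; abel⟩, h₁⟩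
  · intro z hz
    simp only [coe_inter, coe_image, Set.mem_inter_iff, Set.mem_image, mem_coe] at hz
    obtain ⟨⟨a, ha, rfl⟩, hz⟩ := hz
    simp only [coe_filter, mem_product, mem_neg', Set.mem_ofPred_eq]
    exact ⟨⟨by simpa using hz, by simpa using ha⟩, by abel⟩
  · rintro ⟨c₁, c₂⟩ hc
    simp only [coe_filter, Set.mem_ofPred_eq] at hc
    have : -(-c₁ - (x.1 - x.2)) = c₂ := by
      rw [neg_sub, sub_neg_eq_add, sub_add_eq_add_sub, hc.2]; abel
    simp [this]
  · intro z _
    simp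

lemma card_sq_mul_card_sq_le_card_sub_mul_sum (s t : Finset α) :
    #s ^ 2 * #t ^ 2 ≤ #(s - t) * ∑ p ∈ s ×ˢ s, #((t.image (p.1 - p.2 + ·)) ∩ t) := by
  simpa [card_neg, ← sub_eq_add_neg, addEnergy_neg_right_eq_sum] using
    le_card_add_mul_addEnergy s (-t)

lemma card_sq_mul_card_le_mul_sum_of_card_sub_le {s t : Finset α} (ht : t.Nonempty) {D : ℝ}
    (hst : (#(s - t) : ℝ) ≤ D * #t) :
    (#s : ℝ) ^ 2 * #t ≤ D * ∑ p ∈ s ×ˢ s, (#((t.image (p.1 - p.2 + ·)) ∩ t) : ℝ) := by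
  have hcs := (Nat.cast_le (α := ℝ)).2 (card_sq_mul_card_sq_le_card_sub_mul_sum s t)
  push_cast at hcs
  have ht₀ : (0 : ℝ) < #t := by exact_mod_cast ht.card_pos
  have hT : (0 : ℝ) ≤ ∑ p ∈ s ×ˢ s, (#((t.image (p.1 - p.2 + ·)) ∩ t) : ℝ) := by positivity
  nlinarith [mul_le_mul_of_nonneg_right hst hT]

end Finset

lemma le_div_two_pow_add_sum_range {x N : ℝ} (hx : 0 ≤ x) (hxN : x ≤ N) (M : ℕ) :
    x ≤ N / 2 ^ M + ∑ i ∈ range M, if N < 2 ^ (i + 1) * x then N / 2 ^ (i + 1) else 0 := by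
  induction M with
  | zero => simpa using hxN
  | succ M ih =>
    rw [sum_range_succ]
    split_ifs with h
    · calc x ≤ N / 2 ^ M + ∑ i ∈ range M, _ := ih
        _ = _ := by rw [pow_succ]; ring
    · have hN : 0 ≤ N := hx.trans hxN
      have hsum : 0 ≤ ∑ i ∈ range M, if N < 2 ^ (i + 1) * x then N / 2 ^ (i + 1) else 0 :=
        sum_nonneg fun i _ => by split_ifs <;> positivity
      have : x ≤ N / 2 ^ (M + 1) := by rw [le_div_iff₀ (by positivity)]; linarith
      linarith

lemma sum_le_card_mul_div_two_pow_add_sum_range {ι : Type*} (S : Finset ι) (f : ι → ℝ)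
    {N : ℝ} (hf : ∀ p ∈ S, 0 ≤ f p ∧ f p ≤ N) (M : ℕ) :
    ∑ p ∈ S, f p ≤
      #S * (N / 2 ^ M) + ∑ i ∈ range M, #{p ∈ S | N < 2 ^ (i + 1) * f p} * (N / 2 ^ (i + 1)) := by
  calc ∑ p ∈ S, f p
      ≤ ∑ p ∈ S, (N / 2 ^ M +
          ∑ i ∈ range M, if N < 2 ^ (i + 1) * f p then N / 2 ^ (i + 1) else 0) :=
        sum_le_sum fun p hp => le_div_two_pow_add_sum_range (hf p hp).1 (hf p hp).2 M
    _ = _ := by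
        rw [sum_add_distrib, sum_const, nsmul_eq_mul, sum_comm]
        simp only [← sum_filter, sum_const, nsmul_eq_mul]

lemma exists_lt_sum_le_card_filter_mul {ι : Type*} (S : Finset ι) (f : ι → ℝ)
    {N : ℝ} (hf : ∀ p ∈ S, 0 ≤ f p ∧ f p ≤ N) {M : ℕ} (hM : 0 < M)
    (hmass : 2 * (#S * N) ≤ 2 ^ M * ∑ p ∈ S, f p) :
    ∃ i < M, ∑ p ∈ S, f p ≤ 2 * M * (#{p ∈ S | N < 2 ^ (i + 1) * f p} * (N / 2 ^ (i + 1))) := by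
  set T := ∑ p ∈ S, f p
  have hlow : #S * (N / 2 ^ M) ≤ T / 2 := by
    rw [mul_div_assoc', div_le_div_iff₀ (by positivity) two_pos]; linarith
  have hconst : ∑ _ ∈ range M, T / (2 * M) = T / 2 := by
    rw [sum_const, card_range, nsmul_eq_mul]; field_simp
  obtain ⟨i, hi, hle⟩ := exists_le_of_sum_le (nonempty_range_iff.2 hM.ne')
    (f := fun _ => T / (2 * M)) (g := fun i => #{p ∈ S | N < 2 ^ (i + 1) * f p} * (N / 2 ^ (i + 1)))
    (by linarith [sum_le_card_mul_div_two_pow_add_sum_range S f hf M])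
  exact ⟨i, mem_range.1 hi, (div_le_iff₀' (by positivity)).1 hle⟩

lemma exists_two_mul_le_two_pow_le_logb {y : ℝ} (hy : 1 ≤ y) :
    ∃ M : ℕ, 0 < M ∧ 2 * y ≤ 2 ^ M ∧ (M : ℝ) ≤ Real.logb 2 (4 * y) := by
  have hlog : 0 ≤ Real.logb 2 y := Real.logb_nonneg one_lt_two hy
  refine ⟨⌈Real.logb 2 y⌉₊ + 1, Nat.succ_pos _, ?_, ?_⟩
  · calc 2 * y = 2 * 2 ^ Real.logb 2 y := by
          rw [Real.rpow_logb two_pos one_lt_two.ne' (by linarith)]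
      _ ≤ 2 * 2 ^ (⌈Real.logb 2 y⌉₊ : ℝ) := by
          gcongr
          · norm_num
          · exact Nat.le_ceil _
      _ = 2 ^ (⌈Real.logb 2 y⌉₊ + 1) := by rw [Real.rpow_natCast, pow_succ, mul_comm]
  · have h4 : Real.logb 2 (4 * y) = Real.logb 2 y + 2 := by
      rw [Real.logb_mul (by norm_num) (by linarith), show (4 : ℝ) = 2 ^ (2 : ℝ) by norm_num,
        Real.logb_rpow two_pos one_lt_two.ne', add_comm]
    push_cast
    linarith [Nat.ceil_lt_add_one hlog]

theorem statement12_general {Z : Type*} [AddCommGroup Z] [DecidableEq Z]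
    (A : Finset Z) (hA : A.Nonempty) (B : Finset Z)
    (K β : ℝ) (hK : 2 ≤ K) (hβ : 0 ≤ β)
    (hdoub : ((B - A).card : ℝ) ≤ K ^ β * (A.card : ℝ)) :
    ∃ (α : ℝ) (G : Finset (Z × Z)), α ≤ β ∧ G ⊆ B ×ˢ B ∧
      (∀ p ∈ G, K ^ (α - β) * (A.card : ℝ) ≤
        (((A.image (fun a => (p.1 - p.2) + a)) ∩ A).card : ℝ)) ∧
      K ^ (-α) * (B.card : ℝ) ^ 2 / (4 * Real.logb 2 (4 * K ^ β)) ≤ (G.card : ℝ) := by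
  set r : Z × Z → ℝ := fun p => #((A.image (p.1 - p.2 + ·)) ∩ A)
  have hKβ : 1 ≤ K ^ β := Real.one_le_rpow (by linarith) hβ
  have hr : ∀ p ∈ B ×ˢ B, 0 ≤ r p ∧ r p ≤ #A := fun p _ =>
    ⟨by positivity, Nat.cast_le.2 (card_le_card inter_subset_right)⟩
  have hT : 0 ≤ ∑ p ∈ B ×ˢ B, r p := sum_nonneg fun p hp => (hr p hp).1
  have hmass : #B ^ 2 * #A ≤ K ^ β * ∑ p ∈ B ×ˢ B, r p :=
    card_sq_mul_card_le_mul_sum_of_card_sub_le hA hdoub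
  obtain ⟨M, hM, hMK, hML⟩ := exists_two_mul_le_two_pow_le_logb hKβ
  obtain ⟨i, -, hi⟩ := exists_lt_sum_le_card_filter_mul (B ×ˢ B) r hr hM (by
    rw [card_product]; push_cast; nlinarith [mul_le_mul_of_nonneg_right hMK hT])
  set c : ℝ := 2 ^ (i + 1)
  have hc : 1 ≤ c := one_le_pow₀ one_le_two
  have hKc : K ^ Real.logb K c = c := Real.rpow_logb (by linarith) (by linarith) (by linarith)
  set G := {p ∈ B ×ˢ B | #A < c * r p}
  refine ⟨β - Real.logb K c, G, ?_, filter_subset _ _, ?_, ?_⟩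
  · linarith [Real.logb_nonneg (by linarith : 1 < K) hc]
  · intro p hp
    rw [sub_sub_cancel_left, Real.rpow_neg (by linarith), hKc, inv_mul_le_iff₀ (by positivity)]
    exact (mem_filter.1 hp).2.le
  · have hG : c * #B ^ 2 ≤ 2 * M * K ^ β * #G := by
      have hA₀ : (0 : ℝ) < #A := by exact_mod_cast hA.card_pos
      have := hmass.trans (mul_le_mul_of_nonneg_left hi (by positivity))
      rw [show K ^ β * (2 * M * (#G * (#A / c))) = #A * (2 * M * K ^ β * #G) / c by
        field_simp, le_div_iff₀ (by positivity)] at this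
      nlinarith
    have hM₁ : (1 : ℝ) ≤ M := by exact_mod_cast hM
    rw [neg_sub, Real.rpow_sub (by linarith), hKc, div_mul_eq_mul_div, div_div,
      div_le_iff₀ (by nlinarith)]
    nlinarith [mul_le_mul_of_nonneg_left hML (by positivity : (0 : ℝ) ≤ #G * K ^ β)]

/-- If `B ⊆ A` is nonempty, `K ≥ 2`, `β ≥ 0` and `|B − A| ≤ K^β|A|`, then there are `α ≤ β`
and `G ⊆ B × B` with `|((a − a′) + A) ∩ A| ≥ K^{α−β}|A|` for every `(a,a′) ∈ G`, and
`|G| ≥ K^{−α}|B|²/(4 log₂(4K^β))`. -/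
theorem statement12 {Z : Type*} [AddCommGroup Z] [DecidableEq Z]
    (A : Finset Z) (hA : A.Nonempty) (B : Finset Z) (hB : B.Nonempty) (hBA : B ⊆ A)
    (K β : ℝ) (hK : 2 ≤ K) (hβ : 0 ≤ β)
    (hdoub : ((B - A).card : ℝ) ≤ K ^ β * (A.card : ℝ)) :
    ∃ (α : ℝ) (G : Finset (Z × Z)), α ≤ β ∧ G ⊆ B ×ˢ B ∧
      (∀ p ∈ G, K ^ (α - β) * (A.card : ℝ) ≤
        (((A.image (fun a => (p.1 - p.2) + a)) ∩ A).card : ℝ)) ∧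
      K ^ (-α) * (B.card : ℝ) ^ 2 / (4 * Real.logb 2 (4 * K ^ β)) ≤ (G.card : ℝ) :=
  statement12_general A hA B K β hK hβ hdoub
end

section
/- Let Y be a finite nonempty set, let T be a finite nonempty index set, let 0 < ρ ≤ 1, and for each t ∈ T let S_t ⊆ Y satisfy |S_t| ≥ ρ|Y|. Define g(x) = |{t ∈ T : x ∈ S_t}| for x ∈ Y. Then there exist a set X ⊆ Y and a real number L > 0 such that: (i) g(x) ≥ L for every x ∈ X; (ii) |X| · L ≥ ρ |T| |Y| / (4 log₂(4/ρ)); and (iii) L ≤ |T|, so that in particular |X| ≥ ρ |Y| / (4 log₂(4/ρ)). -/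
open Finset
open scoped Classical

set_option maxHeartbeats 2000000 in
/-- If each `S_t ⊆ Y` (for `t` in a finite nonempty `T`) has `|S_t| ≥ ρ|Y|`, and
`g(x) = |{t ∈ T : x ∈ S_t}|`, then there are `X ⊆ Y` and `L > 0` with `g(x) ≥ L` on `X`,
`|X|·L ≥ ρ|T||Y|/(4 log₂(4/ρ))`, and `L ≤ |T|`, so in particular
`|X| ≥ ρ|Y|/(4 log₂(4/ρ))`. -/
theorem statement14 {α ι : Type*} [DecidableEq α]
    (Y : Finset α) (hY : Y.Nonempty) (T : Finset ι) (hT : T.Nonempty)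
    (ρ : ℝ) (hρ0 : 0 < ρ) (hρ1 : ρ ≤ 1)
    (S : ι → Finset α) (hsub : ∀ t ∈ T, S t ⊆ Y)
    (hlow : ∀ t ∈ T, ρ * (Y.card : ℝ) ≤ ((S t).card : ℝ)) :
    ∃ (X : Finset α) (L : ℝ), X ⊆ Y ∧ 0 < L ∧
      (∀ x ∈ X, L ≤ ((T.filter (fun t => x ∈ S t)).card : ℝ)) ∧
      ρ * (T.card : ℝ) * (Y.card : ℝ) / (4 * Real.logb 2 (4 / ρ)) ≤ (X.card : ℝ) * L ∧
      L ≤ (T.card : ℝ) ∧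
      ρ * (Y.card : ℝ) / (4 * Real.logb 2 (4 / ρ)) ≤ (X.card : ℝ) := by
  classical
  set n := T.card with hndef
  have hn1 : 1 ≤ n := hT.card_pos
  have hn0 : (0:ℝ) < n := by exact_mod_cast hn1
  set g : α → ℕ := fun x => (T.filter (fun t => x ∈ S t)).card with hgdef
  have hgle : ∀ x, g x ≤ n := fun x => Finset.card_filter_le _ _
  -- total sum over Y
  have hswap : ∑ x ∈ Y, g x = ∑ t ∈ T, (S t).card := by
    calc ∑ x ∈ Y, g x = ∑ x ∈ Y, ∑ t ∈ T, (if x ∈ S t then 1 else 0) := by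
          refine Finset.sum_congr rfl fun x _ => ?_
          show (T.filter (fun t => x ∈ S t)).card = _
          rw [Finset.card_filter]
      _ = ∑ t ∈ T, ∑ x ∈ Y, (if x ∈ S t then 1 else 0) := Finset.sum_comm
      _ = ∑ t ∈ T, (Y.filter (fun x => x ∈ S t)).card := by
          refine Finset.sum_congr rfl fun t _ => ?_
          simp [Finset.card_filter]
      _ = ∑ t ∈ T, (S t).card := by
          refine Finset.sum_congr rfl fun t ht => ?_
          rw [Finset.filter_mem_eq_inter, Finset.inter_eq_right.mpr (hsub t ht)]
  have htotal : ρ * (n:ℝ) * (Y.card:ℝ) ≤ ∑ x ∈ Y, (g x : ℝ) := by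
    have h1 : ∑ t ∈ T, (ρ * (Y.card:ℝ)) ≤ ∑ t ∈ T, ((S t).card : ℝ) :=
      Finset.sum_le_sum hlow
    rw [Finset.sum_const, nsmul_eq_mul] at h1
    have h2 : (∑ x ∈ Y, (g x : ℝ)) = ∑ t ∈ T, ((S t).card : ℝ) := by
      exact_mod_cast congrArg (Nat.cast : ℕ → ℝ) hswap
    rw [h2]
    calc ρ * (n:ℝ) * (Y.card:ℝ) = (n:ℝ) * (ρ * (Y.card:ℝ)) := by ring
      _ ≤ _ := h1
  -- choose k
  set k := ⌈Real.logb 2 (2/ρ)⌉₊ with hkdef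
  have h2ρ : (2:ℝ) ≤ 2/ρ := by
    rw [le_div_iff₀ hρ0]; nlinarith
  have h2ρ0 : (0:ℝ) < 2/ρ := by positivity
  have hlog1 : (1:ℝ) ≤ Real.logb 2 (2/ρ) := by
    have h := Real.logb_le_logb_of_le (b := 2) (by norm_num) (by norm_num) h2ρ
    rwa [Real.logb_self_eq_one (by norm_num)] at h
  have hk1 : 1 ≤ k := Nat.one_le_ceil_iff.mpr (by linarith)
  have hk0 : (0:ℝ) < k := by exact_mod_cast hk1
  have h2k : (2/ρ : ℝ) ≤ 2^k := by
    have h1 : Real.logb 2 (2/ρ) ≤ (k:ℝ) := Nat.le_ceil _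
    have h2 : (2:ℝ) ^ Real.logb 2 (2/ρ) ≤ (2:ℝ) ^ (k:ℝ) :=
      Real.rpow_le_rpow_left_iff (by norm_num : (1:ℝ) < 2) |>.mpr h1
    rwa [Real.rpow_logb (by norm_num) (by norm_num) h2ρ0, Real.rpow_natCast] at h2
  have hlog4 : (0:ℝ) < Real.logb 2 (4/ρ) := by
    apply Real.logb_pos (by norm_num)
    rw [lt_div_iff₀ hρ0]; nlinarith
  have hklog : (k:ℝ) ≤ Real.logb 2 (4/ρ) := by
    have h1 : (k:ℝ) < Real.logb 2 (2/ρ) + 1 :=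
      Nat.ceil_lt_add_one (by linarith)
    have h2 : Real.logb 2 (2/ρ) + 1 = Real.logb 2 (4/ρ) := by
      have : (4/ρ : ℝ) = (2/ρ) * 2 := by ring
      rw [this, Real.logb_mul (by positivity) (by norm_num)]
      simp [Real.logb_self_eq_one]
    linarith
  -- dyadic level sets
  set X' : ℕ → Finset α := fun j => Y.filter (fun x => 2^j * g x ≤ n ∧ n < 2^(j+1) * g x)
    with hX'def
  -- covering
  have hcover : ∀ x ∈ Y, ¬ (2^k * g x ≤ n) → ∃ j ∈ Finset.range k, x ∈ X' j := by
    intro x hx hxt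
    have hP : ∃ j, n < 2^(j+1) * g x := by
      refine ⟨k - 1, ?_⟩
      have : k - 1 + 1 = k := Nat.succ_pred_eq_of_pos hk1
      rw [this]; omega
    let j := Nat.find hP
    have hj1 : n < 2^(j+1) * g x := Nat.find_spec hP
    have hjk : j < k := by
      have : j ≤ k - 1 := Nat.find_min' hP (by
        have : k - 1 + 1 = k := Nat.succ_pred_eq_of_pos hk1
        rw [this]; omega)
      omega
    have hj2 : 2^j * g x ≤ n := by
      rcases Nat.eq_zero_or_pos j with h0 | h0
      · simpa [h0] using hgle x
      · have hm : ¬ (n < 2^(j-1+1) * g x) := Nat.find_min hP (by omega)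
        have : j - 1 + 1 = j := Nat.succ_pred_eq_of_pos h0
        rw [this] at hm; omega
    exact ⟨j, Finset.mem_range.mpr hjk, Finset.mem_filter.mpr ⟨hx, hj2, hj1⟩⟩
  -- disjointness
  have hdisj : Set.PairwiseDisjoint ↑(Finset.range k) X' := by
    intro i hi j hj hij
    wlog hlt : i < j generalizing i j
    · exact (this hj hi hij.symm (by omega)).symm
    refine Finset.disjoint_left.mpr fun x hxi hxj => ?_
    have h1 := (Finset.mem_filter.mp hxi).2.2
    have h2 := (Finset.mem_filter.mp hxj).2.1
    have : 2^(i+1) * g x ≤ 2^j * g x :=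
      Nat.mul_le_mul_right _ (Nat.pow_le_pow_right (by norm_num) (by omega))
    omega
  -- splitting the sum
  set tl := Y.filter (fun x => 2^k * g x ≤ n) with htldef
  have hsplit : ∑ x ∈ Y, g x ≤ (∑ x ∈ tl, g x) + ∑ j ∈ Finset.range k, ∑ x ∈ X' j, g x := by
    have h1 : ∑ x ∈ Y, g x = (∑ x ∈ tl, g x) + ∑ x ∈ Y.filter (fun x => ¬ (2^k * g x ≤ n)), g x :=
      (Finset.sum_filter_add_sum_filter_not Y _ g).symm
    have h2 : Y.filter (fun x => ¬ (2^k * g x ≤ n)) ⊆ (Finset.range k).biUnion X' := by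
      intro x hx
      obtain ⟨hxY, hxn⟩ := Finset.mem_filter.mp hx
      obtain ⟨j, hj, hxj⟩ := hcover x hxY hxn
      exact Finset.mem_biUnion.mpr ⟨j, hj, hxj⟩
    have h3 : ∑ x ∈ Y.filter (fun x => ¬ (2^k * g x ≤ n)), g x
        ≤ ∑ x ∈ (Finset.range k).biUnion X', g x :=
      Finset.sum_le_sum_of_subset h2
    rw [Finset.sum_biUnion hdisj] at h3
    omega
  -- real estimate for tail
  have htail : (∑ x ∈ tl, (g x:ℝ)) ≤ (Y.card:ℝ) * (ρ * n / 2) := by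
    have hbound : ∀ x ∈ tl, (g x : ℝ) ≤ ρ * n / 2 := by
      intro x hx
      have h1 : 2^k * g x ≤ n := (Finset.mem_filter.mp hx).2
      have h1R : (2:ℝ)^k * (g x:ℝ) ≤ (n:ℝ) := by exact_mod_cast h1
      have h2 : (2/ρ : ℝ) * (g x:ℝ) ≤ (n:ℝ) := by
        have := mul_le_mul_of_nonneg_right h2k (by positivity : (0:ℝ) ≤ (g x:ℝ))
        linarith
      rw [div_mul_eq_mul_div, div_le_iff₀ hρ0] at h2
      linarith
    calc (∑ x ∈ tl, (g x:ℝ)) ≤ ∑ x ∈ tl, (ρ * n / 2) := Finset.sum_le_sum hbound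
      _ = (tl.card:ℝ) * (ρ * n / 2) := by rw [Finset.sum_const, nsmul_eq_mul]
      _ ≤ (Y.card:ℝ) * (ρ * n / 2) := by
        have h' : (tl.card:ℝ) ≤ (Y.card:ℝ) := by
          exact_mod_cast Finset.card_le_card (Finset.filter_subset _ _)
        exact mul_le_mul_of_nonneg_right h' (by positivity)
  -- the bulk of the sum
  have hbulk : ρ * n * (Y.card:ℝ) / 2 ≤ ∑ j ∈ Finset.range k, ∑ x ∈ X' j, (g x:ℝ) := by
    have hsplitR : (∑ x ∈ Y, (g x:ℝ))
        ≤ (∑ x ∈ tl, (g x:ℝ)) + ∑ j ∈ Finset.range k, ∑ x ∈ X' j, (g x:ℝ) := by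
      exact_mod_cast hsplit
    linarith [htotal, htail, hsplitR]
  -- pigeonhole
  obtain ⟨j, hjk, hjbig⟩ : ∃ j ∈ Finset.range k,
      ρ * n * (Y.card:ℝ) / (2*k) ≤ ∑ x ∈ X' j, (g x:ℝ) := by
    apply Finset.exists_le_of_sum_le (by simp; omega)
    rw [Finset.sum_const, Finset.card_range, nsmul_eq_mul]
    have hE : (k:ℝ) * (ρ * n * (Y.card:ℝ) / (2*k)) = ρ * n * (Y.card:ℝ) / 2 := by
      field_simp
    rw [hE]; exact hbulk
  set L : ℝ := (n:ℝ) / 2^(j+1) with hLdef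
  have hLpos : 0 < L := by positivity
  have hLn : L ≤ (n:ℝ) := by
    apply div_le_self (by positivity)
    exact one_le_pow₀ (by norm_num : (1:ℝ) ≤ 2)
  have hgeL : ∀ x ∈ X' j, L ≤ (g x : ℝ) := by
    intro x hx
    have h1 : n < 2^(j+1) * g x := (Finset.mem_filter.mp hx).2.2
    have h1R : (n:ℝ) < 2^(j+1) * (g x:ℝ) := by exact_mod_cast h1
    rw [hLdef, div_le_iff₀ (by positivity : (0:ℝ) < 2^(j+1))]
    rw [mul_comm] at h1R
    linarith
  have hmain : ρ * (n:ℝ) * (Y.card:ℝ) / (4 * Real.logb 2 (4/ρ)) ≤ ((X' j).card:ℝ) * L := by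
    have hub : ∀ x ∈ X' j, (g x:ℝ) ≤ 2 * ((n:ℝ) / 2^(j+1)) := by
      intro x hx
      have h1 : 2^j * g x ≤ n := (Finset.mem_filter.mp hx).2.1
      have h1R : (2:ℝ)^j * (g x:ℝ) ≤ (n:ℝ) := by exact_mod_cast h1
      have hp : (0:ℝ) < 2^j := by positivity
      have he : 2 * ((n:ℝ) / 2^(j+1)) = (n:ℝ) / 2^j := by
        rw [pow_succ]; field_simp
      rw [he, le_div_iff₀ hp, mul_comm]
      exact h1R
    have hsumub : (∑ x ∈ X' j, (g x:ℝ)) ≤ ((X' j).card:ℝ) * (2 * ((n:ℝ) / 2^(j+1))) := by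
      calc (∑ x ∈ X' j, (g x:ℝ)) ≤ ∑ x ∈ X' j, 2 * ((n:ℝ) / 2^(j+1)) :=
            Finset.sum_le_sum hub
        _ = _ := by rw [Finset.sum_const, nsmul_eq_mul]
    have key : ρ * n * (Y.card:ℝ) / (4*k) ≤ ((X' j).card:ℝ) * ((n:ℝ) / 2^(j+1)) := by
      have h := le_trans hjbig hsumub
      rw [div_le_iff₀ (by positivity : (0:ℝ) < 2*(k:ℝ))] at h
      rw [div_le_iff₀ (by positivity : (0:ℝ) < 4*(k:ℝ))]
      have he : ((X' j).card:ℝ) * (2 * ((n:ℝ) / 2^(j+1))) * (2*(k:ℝ))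
          = ((X' j).card:ℝ) * ((n:ℝ) / 2^(j+1)) * (4*(k:ℝ)) := by ring
      linarith
    refine le_trans ?_ key
    have h4 : 4*(k:ℝ) ≤ 4 * Real.logb 2 (4/ρ) := by linarith
    refine div_le_div_of_nonneg_left ?_ ?_ h4
    · positivity
    · linarith
  have hlast : ρ * (Y.card:ℝ) / (4 * Real.logb 2 (4/ρ)) ≤ ((X' j).card:ℝ) := by
    have h1 : ((X' j).card:ℝ) * L ≤ ((X' j).card:ℝ) * (n:ℝ) :=
      mul_le_mul_of_nonneg_left hLn (by positivity)
    have h2 : ρ * (n:ℝ) * (Y.card:ℝ) / (4 * Real.logb 2 (4/ρ)) ≤ ((X' j).card:ℝ) * (n:ℝ) :=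
      hmain.trans h1
    have heq : ρ * (Y.card:ℝ) / (4 * Real.logb 2 (4/ρ))
        = (ρ * (n:ℝ) * (Y.card:ℝ) / (4 * Real.logb 2 (4/ρ))) / (n:ℝ) := by
      field_simp
    rw [heq, div_le_iff₀ hn0]
    exact h2
  exact ⟨X' j, L, Finset.filter_subset _ _, hLpos, hgeL, hmain, hLn, hlast⟩
end

section
/- For every prime p there exists a function f from the positive reals to the positive reals with the following property: for every n ∈ ℕ, every real K ≥ 1, and every nonempty subset A ⊆ F_p^n with |A + A| ≤ K|A|, there exist a linear subspace H of F_p^n and an element z ∈ F_p^n such that A ⊆ z + H and |H| ≤ f(K) |A|. -/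
open Finset Pointwise

/-- Freiman's theorem in `F_p^n`: for every prime `p` there is `f : ℝ₊ → ℝ₊` such that any
nonempty `A ⊆ F_p^n` with `|A + A| ≤ K|A|` is contained in a translate `z + H` of a subspace
`H` with `|H| ≤ f(K)|A|`. -/
theorem statement15 (p : ℕ) (hp : p.Prime) :
    ∃ f : ℝ → ℝ, (∀ x : ℝ, 0 < x → 0 < f x) ∧
      ∀ (n : ℕ) (K : ℝ), 1 ≤ K →
        ∀ A : Finset (Fin n → ZMod p), A.Nonempty →
          ((A + A).card : ℝ) ≤ K * (A.card : ℝ) →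
          ∃ (H : Submodule (ZMod p) (Fin n → ZMod p)) (z : Fin n → ZMod p),
            (↑A : Set (Fin n → ZMod p)) ⊆ (fun h => z + h) '' (H : Set (Fin n → ZMod p)) ∧
            (Nat.card H : ℝ) ≤ f K * (A.card : ℝ) := by
  classical
  haveI : Fact p.Prime := ⟨hp⟩
  haveI : NeZero p := ⟨hp.pos.ne'⟩
  have hp1 : (1 : ℝ) ≤ (p : ℝ) := by exact_mod_cast hp.one_lt.le
  refine ⟨fun x => (p : ℝ) ^ (⌈x ^ 4⌉₊) * x ^ 2, fun x hx => by positivity, ?_⟩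
  intro n K hK A hA hcard
  obtain ⟨a, ha⟩ := hA
  set A' : Finset (Fin n → ZMod p) := A - {a} with hA'def
  have h0 : (0 : Fin n → ZMod p) ∈ A' :=
    Finset.mem_sub.2 ⟨a, ha, a, Finset.mem_singleton_self a, sub_self a⟩
  have hA'ne : A'.Nonempty := ⟨0, h0⟩
  have cardA' : #A' = #A := by
    rw [hA'def, Finset.sub_singleton]
    exact Finset.card_image_of_injective _ sub_left_injective
  have hApos : (0 : ℝ) < #A := by
    have := Finset.card_pos.2 ⟨a, ha⟩; exact_mod_cast this
  have hsum : A' + A' = (A + A) - {a + a} := by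
    rw [hA'def, sub_add_sub_comm, Finset.singleton_add_singleton]
  have cardsum : #(A' + A') = #(A + A) := by
    rw [hsum, Finset.sub_singleton]
    exact Finset.card_image_of_injective _ sub_left_injective
  -- Plünnecke-Ruzsa for A'
  have key : ∀ m k : ℕ, (#(m • A' - k • A') : ℝ) ≤ K ^ (m + k) * #A := by
    intro m k
    have h := Finset.pluennecke_ruzsa_inequality_nsmul_sub_nsmul_add hA'ne A' m k
    have h2 : ((#(m • A' - k • A') : ℚ≥0) : ℝ)
        ≤ ((((#(A' + A') : ℚ≥0) / (#A' : ℚ≥0)) ^ (m + k) * (#A' : ℚ≥0) : ℚ≥0) : ℝ) := by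
      exact_mod_cast h
    push_cast at h2
    have hdiv : ((#(A' + A') : ℝ) / (#A' : ℝ)) ≤ K := by
      rw [div_le_iff₀ (by rwa [cardA'])]
      rw [cardsum, cardA']
      exact hcard
    calc (#(m • A' - k • A') : ℝ) ≤ ((#(A' + A') : ℝ) / (#A' : ℝ)) ^ (m + k) * #A' := h2
      _ ≤ K ^ (m + k) * #A := by
          rw [cardA'] at hdiv ⊢
          gcongr
  -- Ruzsa covering
  have hcov0 : (#((A' + A' - A') + A') : ℝ) ≤ K ^ 4 * #A' := by
    have e : (A' + A' - A') + A' = 3 • A' - 1 • A' := by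
      rw [sub_add_eq_add_sub]
      congr 1
      · rw [show (3 : ℕ) = 2 + 1 from rfl, succ_nsmul, two_nsmul]
      · rw [one_nsmul]
    rw [e, cardA']
    exact key 3 1
  obtain ⟨F, hFsub, hFcard, hFcov⟩ := Finset.ruzsa_covering_add hA'ne hcov0
  -- the subspace generated by F
  set W : Submodule (ZMod p) (Fin n → ZMod p) := Submodule.span (ZMod p) (F : Set _)
    with hWdef
  -- every iterated sumset of A' lies in W + (A' - A')
  have claim : ∀ m : ℕ, ∀ x ∈ (m + 1) • A',
      x ∈ (W : Set (Fin n → ZMod p)) + (↑(A' - A' : Finset _) : Set _) := by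
    intro m
    induction m with
    | zero =>
      intro x hx
      rw [one_nsmul] at hx
      have hx' : x - 0 ∈ A' - A' := Finset.sub_mem_sub hx h0
      have := Set.add_mem_add (W.zero_mem) (Finset.mem_coe.2 hx')
      simpa using this
    | succ m ih =>
      intro x hx
      rw [succ_nsmul] at hx
      obtain ⟨y, hy, z, hz, rfl⟩ := Finset.mem_add.1 hx
      obtain ⟨w, hw, d, hd, rfl⟩ := Set.mem_add.1 (ih y hy)
      have hdz : d + z ∈ A' + A' - A' := by
        obtain ⟨u, hu, v, hv, rfl⟩ := Finset.mem_sub.1 (Finset.mem_coe.1 hd)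
        have huvz : (u - v) + z = (u + z) - v := by ring
        rw [huvz]
        exact Finset.sub_mem_sub (Finset.add_mem_add hu hz) hv
      obtain ⟨f, hf, d', hd', hfd⟩ := Finset.mem_add.1 (hFcov hdz)
      have hwf : w + f ∈ (W : Set (Fin n → ZMod p)) :=
        W.add_mem hw (Submodule.subset_span (Finset.mem_coe.2 hf))
      rw [add_assoc, ← hfd, ← add_assoc]
      exact Set.add_mem_add hwf (Finset.mem_coe.2 hd')
  -- elements of span A' lie in some iterated sumset
  have spanmem : ∀ x, x ∈ Submodule.span (ZMod p) (A' : Set _) →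
      ∃ m : ℕ, x ∈ (m + 1) • A' := by
    intro x hx
    induction hx using Submodule.span_induction with
    | mem x h => exact ⟨0, by simpa [one_nsmul] using h⟩
    | zero => exact ⟨0, by simpa [one_nsmul] using h0⟩
    | add x y hx hy ihx ihy =>
      obtain ⟨m, hm⟩ := ihx
      obtain ⟨k, hk⟩ := ihy
      refine ⟨m + k + 1, ?_⟩
      rw [show m + k + 1 + 1 = (m + 1) + (k + 1) by omega, add_nsmul]
      exact Finset.add_mem_add hm hk
    | smul c x hx ihx =>
      obtain ⟨m, hm⟩ := ihx
      have hcx : c • x = c.val • x := by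
        conv_lhs => rw [← ZMod.natCast_rightInverse c]
        rw [Nat.cast_smul_eq_nsmul]
      rcases Nat.eq_zero_or_pos c.val with h0v | h0v
      · refine ⟨0, ?_⟩
        rw [hcx, h0v, zero_smul, one_nsmul]
        exact h0
      · have hN : 1 ≤ c.val * (m + 1) := Nat.one_le_iff_ne_zero.2 (by positivity)
        refine ⟨c.val * (m + 1) - 1, ?_⟩
        rw [hcx, show c.val * (m + 1) - 1 + 1 = c.val * (m + 1) from Nat.succ_pred_eq_of_pos hN,
          mul_comm, mul_nsmul]
        exact Finset.nsmul_mem_nsmul hm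
  set H : Submodule (ZMod p) (Fin n → ZMod p) := Submodule.span (ZMod p) (A' : Set _)
    with hHdef
  set WF : Finset (Fin n → ZMod p) := (W : Set _).toFinset with hWFdef
  have hWFcoe : (WF : Set (Fin n → ZMod p)) = (W : Set _) := Set.coe_toFinset _
  have HsubF : (H : Set (Fin n → ZMod p)) ⊆ ((WF + (A' - A') : Finset _) : Set _) := by
    intro x hx
    obtain ⟨m, hm⟩ := spanmem x hx
    have := claim m x hm
    rwa [Finset.coe_add, hWFcoe]
  -- cardinality bounds
  have hcardH : (Nat.card H : ℝ) ≤ (#WF : ℝ) * #(A' - A') := by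
    have h1 : Nat.card H = (H : Set (Fin n → ZMod p)).ncard := by
      rw [← Nat.card_coe_set_eq]; rfl
    have h2 : (H : Set (Fin n → ZMod p)).ncard ≤ ((WF + (A' - A') : Finset _) : Set _).ncard :=
      Set.ncard_le_ncard HsubF (Finset.finite_toSet _)
    rw [Set.ncard_coe_finset] at h2
    have h3 := Finset.card_add_le (s := WF) (t := A' - A')
    have : Nat.card H ≤ #WF * #(A' - A') := by rw [h1]; exact h2.trans h3
    exact_mod_cast this
  have hWFcard : (#WF : ℝ) ≤ (p : ℝ) ^ (⌈K ^ 4⌉₊) := by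
    have hFle : #F ≤ ⌈K ^ 4⌉₊ := by
      have : (#F : ℝ) ≤ (⌈K ^ 4⌉₊ : ℝ) := hFcard.trans (Nat.le_ceil _)
      exact_mod_cast this
    have hrk : Module.finrank (ZMod p) W ≤ #F := finrank_span_finset_le_card F
    have hcardW : #WF = p ^ Module.finrank (ZMod p) W := by
      rw [hWFdef, Set.toFinset_card,
        show Fintype.card ((W : Set (Fin n → ZMod p)) : Type _) = Fintype.card W from rfl,
        Module.card_eq_pow_finrank (K := ZMod p), ZMod.card]
    rw [hcardW]
    have hle : p ^ Module.finrank (ZMod p) W ≤ p ^ ⌈K ^ 4⌉₊ :=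
      Nat.pow_le_pow_right hp.pos (hrk.trans hFle)
    calc ((p ^ Module.finrank (ZMod p) W : ℕ) : ℝ) ≤ ((p ^ ⌈K ^ 4⌉₊ : ℕ) : ℝ) := by
          exact_mod_cast hle
      _ = (p : ℝ) ^ (⌈K ^ 4⌉₊) := by push_cast; ring
  have hsubcard : (#(A' - A') : ℝ) ≤ K ^ 2 * #A := by
    have := key 1 1
    rwa [one_nsmul] at this
  refine ⟨H, a, ?_, ?_⟩
  · intro x hx
    refine ⟨x - a, Submodule.subset_span ?_, by simp⟩
    exact Finset.mem_coe.2 (Finset.mem_sub.2 ⟨x, hx, a, Finset.mem_singleton_self a, rfl⟩)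
  · show (Nat.card H : ℝ) ≤ (p : ℝ) ^ (⌈K ^ 4⌉₊) * K ^ 2 * (#A : ℝ)
    calc (Nat.card H : ℝ) ≤ (#WF : ℝ) * #(A' - A') := hcardH
      _ ≤ (p : ℝ) ^ (⌈K ^ 4⌉₊) * (K ^ 2 * #A) :=
          mul_le_mul hWFcard hsubcard (by positivity) (by positivity)
      _ = (p : ℝ) ^ (⌈K ^ 4⌉₊) * K ^ 2 * #A := by ring
end
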